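/- arXiv:2211.02939 — 2 statements merged into one kernel-verified Lean document; each statement's English description precedes it below -/
import Mathlib

section
/- Suppose nonnegative random quantities E_k := E[L^k(ξ^k) − L^{*,k}] satisfy E[L^{k−1}(ξ^k) − L^{*,k−1}] ≤ (1 − σ/(dL))·(L^{k−1}(ξ^{k−1}) − L^{*,k−1}) for each k, and that |L^k(ξ) − L^{k−1}(ξ)| ≤ e uniformly in ξ and |L^{*,k} − L^{*,k−1}| ≤ e. Then E_k ≤ (1 − σ/(dL))^k · E_0 + 2e·dL/σ for all k, and consequently limsup_{k→∞} E_k ≤ 2e·dL/σ. -/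
/-!
Replacing the objective `L^k` by `L^{k+1}` and the optimal value `L^{*,k}` by `L^{*,k+1}`
costs at most `2e` in expectation, so the tracking error satisfies the affine recursion
`E_{k+1} ≤ ρ E_k + 2e` with `ρ = 1 - σ/(dL) ∈ [0, 1)`. Unrolling it gives
`E_k ≤ ρ^k E_0 + 2e/(1 - ρ)`, and `2e/(1 - ρ) = 2e dL/σ` is the asymptotic floor.
-/

open MeasureTheory Filter Topology

theorem le_pow_mul_add_div_one_sub_of_le_mul_add {u : ℕ → ℝ} {ρ b : ℝ} (hρ₀ : 0 ≤ ρ)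
    (hρ₁ : ρ < 1) (hb : 0 ≤ b) (hu : ∀ k, u (k + 1) ≤ ρ * u k + b) (k : ℕ) :
    u k ≤ ρ ^ k * u 0 + b / (1 - ρ) := by
  have hfix : ρ * (b / (1 - ρ)) + b = b / (1 - ρ) := by
    field_simp [(sub_pos.mpr hρ₁).ne']
    ring
  induction k with
  | zero => simpa using div_nonneg hb (sub_pos.mpr hρ₁).le
  | succ n ih =>
    calc u (n + 1) ≤ ρ * u n + b := hu n
      _ ≤ ρ * (ρ ^ n * u 0 + b / (1 - ρ)) + b := by gcongr
      _ = ρ ^ (n + 1) * u 0 + b / (1 - ρ) := by linear_combination hfix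

theorem limsup_le_of_le_pow_mul_add {u : ℕ → ℝ} {m ρ a C : ℝ} (hm : ∀ k, m ≤ u k)
    (hρ₀ : 0 ≤ ρ) (hρ₁ : ρ < 1) (hu : ∀ k, u k ≤ ρ ^ k * a + C) :
    limsup u atTop ≤ C := by
  have hlim : Tendsto (fun k => ρ ^ k * a + C) atTop (𝓝 C) := by
    simpa using ((tendsto_pow_atTop_nhds_zero_of_lt_one hρ₀ hρ₁).mul_const a).add_const C
  calc limsup u atTop ≤ limsup (fun k => ρ ^ k * a + C) atTop :=
        limsup_le_limsup (Eventually.of_forall hu) (isCoboundedUnder_le_of_le atTop hm)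
          hlim.isBoundedUnder_le
    _ = C := hlim.limsup_eq

theorem integral_sub_const_le_of_abs_sub_le {Ω : Type*} [MeasurableSpace Ω] {μ : Measure Ω}
    [IsProbabilityMeasure μ] {f g : Ω → ℝ} {a b e : ℝ} (hf : Integrable f μ)
    (hg : Integrable g μ) (hfg : ∀ ω, |f ω - g ω| ≤ e) (hab : |a - b| ≤ e) :
    ∫ ω, (f ω - a) ∂μ ≤ ∫ ω, (g ω - b) ∂μ + 2 * e := by
  have hfg_int : ∫ ω, f ω ∂μ ≤ ∫ ω, g ω ∂μ + e := by
    calc ∫ ω, f ω ∂μ ≤ ∫ ω, (g ω + e) ∂μ :=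
          integral_mono hf (hg.add (integrable_const e)) fun ω => by
            linarith [(abs_le.mp (hfg ω)).2]
      _ = ∫ ω, g ω ∂μ + e := by simp [integral_add hg (integrable_const e)]
  rw [integral_sub hf (integrable_const a), integral_sub hg (integrable_const b)]
  simp only [integral_const, probReal_univ, one_smul]
  linarith [(abs_le.mp hab).1]

theorem stmt_7_general {Ω : Type*} [MeasurableSpace Ω] (μ : Measure Ω) [IsProbabilityMeasure μ]
    {α : Type*} (ξ : ℕ → Ω → α) (Lf : ℕ → α → ℝ) (Lstar : ℕ → ℝ) (e : ℝ)
    (dim : ℕ) (σ L : ℝ) (hσ : 0 < σ) (hσdL : σ ≤ dim * L)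
    (hint : ∀ k j, Integrable (fun ω => Lf j (ξ k ω)) μ)
    (hnonneg : ∀ k ω, Lstar k ≤ Lf k (ξ k ω))
    (hrec : ∀ k, (∫ ω, (Lf k (ξ (k + 1) ω) - Lstar k) ∂μ) ≤
      (1 - σ / (dim * L)) * ∫ ω, (Lf k (ξ k ω) - Lstar k) ∂μ)
    (hdrift : ∀ k, ∀ v : α, |Lf (k + 1) v - Lf k v| ≤ e)
    (hstar : ∀ k, |Lstar (k + 1) - Lstar k| ≤ e) :
    (∀ k, (∫ ω, (Lf k (ξ k ω) - Lstar k) ∂μ) ≤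
        (1 - σ / (dim * L)) ^ k * (∫ ω, (Lf 0 (ξ 0 ω) - Lstar 0) ∂μ)
          + 2 * e * (dim * L) / σ) ∧
      Filter.limsup (fun k => ∫ ω, (Lf k (ξ k ω) - Lstar k) ∂μ) Filter.atTop ≤
        2 * e * (dim * L) / σ := by
  set ρ := 1 - σ / (dim * L)
  have hdL : 0 < (dim : ℝ) * L := hσ.trans_le hσdL
  have hρ₀ : 0 ≤ ρ := sub_nonneg.mpr ((div_le_one hdL).mpr hσdL)
  have hρ₁ : ρ < 1 := sub_lt_self 1 (div_pos hσ hdL)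
  have he : 0 ≤ e := (abs_nonneg _).trans (hstar 0)
  have hfloor : 2 * e / (1 - ρ) = 2 * e * (dim * L) / σ := by
    simp only [ρ, sub_sub_cancel]
    field_simp
  set E : ℕ → ℝ := fun k => ∫ ω, (Lf k (ξ k ω) - Lstar k) ∂μ
  have hstep (k : ℕ) : E (k + 1) ≤ ρ * E k + 2 * e :=
    (integral_sub_const_le_of_abs_sub_le (hint _ _) (hint _ _) (fun ω => hdrift k _)
      (hstar k)).trans (by linarith [hrec k])
  have hbound := le_pow_mul_add_div_one_sub_of_le_mul_add hρ₀ hρ₁ (by positivity) hstep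
  rw [hfloor] at hbound
  exact ⟨hbound, limsup_le_of_le_pow_mul_add
    (fun k => integral_nonneg fun ω => sub_nonneg.mpr (hnonneg k ω)) hρ₀ hρ₁ hbound⟩

/-- Tracking-error bound for a time-varying objective (Theorem 2 of the paper):
under the per-step expected contraction and uniform bounds `e` on the drift of the
objective and of the optimal values, the expected tracking error
`E_k = E[L^k(ξ^k) − L^{*,k}]` converges linearly up to the asymptotic floor
`2 e d L / σ`, and its limsup is bounded by that floor. -/
theorem stmt_7 {Ω : Type*} [MeasurableSpace Ω] (μ : Measure Ω) [IsProbabilityMeasure μ]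
    {α : Type*} (ξ : ℕ → Ω → α) (Lf : ℕ → α → ℝ) (Lstar : ℕ → ℝ) (e : ℝ) (he : 0 ≤ e)
    (dim : ℕ) (hdim : 0 < dim) (σ L : ℝ) (hσ : 0 < σ) (hL : 0 < L) (hσdL : σ ≤ dim * L)
    (hint : ∀ k j, Integrable (fun ω => Lf j (ξ k ω)) μ)
    (hnonneg : ∀ k ω, Lstar k ≤ Lf k (ξ k ω))
    (hrec : ∀ k, (∫ ω, (Lf k (ξ (k + 1) ω) - Lstar k) ∂μ) ≤
      (1 - σ / (dim * L)) * ∫ ω, (Lf k (ξ k ω) - Lstar k) ∂μ)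
    (hdrift : ∀ k, ∀ v : α, |Lf (k + 1) v - Lf k v| ≤ e)
    (hstar : ∀ k, |Lstar (k + 1) - Lstar k| ≤ e) :
    (∀ k, (∫ ω, (Lf k (ξ k ω) - Lstar k) ∂μ) ≤
        (1 - σ / (dim * L)) ^ k * (∫ ω, (Lf 0 (ξ 0 ω) - Lstar 0) ∂μ)
          + 2 * e * (dim * L) / σ) ∧
      Filter.limsup (fun k => ∫ ω, (Lf k (ξ k ω) - Lstar k) ∂μ) Filter.atTop ≤
        2 * e * (dim * L) / σ :=
  stmt_7_general μ ξ Lf Lstar e dim σ L hσ hσdL hint hnonneg hrec hdrift hstar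
end

section
/- Let f : ℝ^d → ℝ be differentiable with coordinate-wise L-Lipschitz gradient, and let i be chosen uniformly at random from {1,…,d}, with exact coordinate minimization ξ⁺ := ξ + α*·e_i, α* := argmin_α [α∇_i f(ξ) + (L/2)α²] = −∇_i f(ξ)/L (unconstrained case, χ ≡ 0). Then E[f(ξ⁺)] ≤ f(ξ) − (1/(2dL))·‖∇f(ξ)‖². If moreover f satisfies the PL inequality (1/2)‖∇f(ξ)‖² ≥ σ·(f(ξ) − f*), then E[f(ξ⁺)] − f* ≤ (1 − σ/(dL))·(f(ξ) − f*). -/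
/-!
Along the line through `ξ` in direction `eᵢ`, the coordinate-wise Lipschitz bound on `∂ᵢf` gives
the quadratic upper model `f (ξ + α eᵢ) ≤ f ξ + α ∂ᵢf(ξ) + L/2 α²`. Its minimizer
`α = -∂ᵢf(ξ)/L` decreases `f` by at least `∂ᵢf(ξ)²/(2L)`; averaging over `i` gives the expected
decrease `‖∇f(ξ)‖²/(2dL)`, and the PL inequality bounds `‖∇f(ξ)‖²/2` below by `σ (f ξ - f*)`.
-/

theorem le_add_mul_deriv_add_sq_of_abs_deriv_sub_le {φ φ' : ℝ → ℝ} {L : ℝ}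
    (hφ : ∀ t, HasDerivAt φ (φ' t) t) (hφ' : ∀ t, |φ' t - φ' 0| ≤ L * |t|) (t : ℝ) :
    φ t ≤ φ 0 + t * φ' 0 + L / 2 * t ^ 2 := by
  -- The claim is `ψ 1 ≤ ψ 0`, and the Lipschitz bound makes `ψ` antitone on `s ≥ 0`.
  set ψ : ℝ → ℝ := fun s ↦ φ (s * t) - s * t * φ' 0 - L / 2 * s ^ 2 * t ^ 2
  have hψ : ∀ s, HasDerivAt ψ (t * (φ' (s * t) - φ' 0) - L * s * t ^ 2) s := by
    intro s
    have h := ((hφ (s * t)).comp s ((hasDerivAt_id s).mul_const t)).sub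
      (((hasDerivAt_id s).mul_const t).mul_const (φ' 0))
      |>.sub ((((hasDerivAt_id s).pow 2).const_mul (L / 2)).mul_const (t ^ 2))
    refine h.congr_deriv ?_
    simp only [id, one_mul, mul_one, Nat.cast_ofNat]
    ring
  have hψ'_nonpos : ∀ s, 0 ≤ s → t * (φ' (s * t) - φ' 0) - L * s * t ^ 2 ≤ 0 := by
    intro s hs
    calc t * (φ' (s * t) - φ' 0) - L * s * t ^ 2
        ≤ |t| * (L * |s * t|) - L * s * t ^ 2 := by
          refine sub_le_sub_right ((le_abs_self _).trans ?_) _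
          rw [abs_mul]
          exact mul_le_mul_of_nonneg_left (hφ' _) (abs_nonneg t)
      _ = 0 := by
          rw [abs_mul, abs_of_nonneg hs, ← sq_abs t]; ring
  have hanti : AntitoneOn ψ (Set.Icc 0 1) :=
    antitoneOn_of_hasDerivWithinAt_nonpos (convex_Icc 0 1)
      (fun s _ ↦ (hψ s).continuousAt.continuousWithinAt)
      (fun s _ ↦ (hψ s).hasDerivWithinAt)
      (fun s hs ↦ hψ'_nonpos s (interior_subset hs).1)
  have := hanti (by simp) (by simp) zero_le_one
  norm_num [ψ] at this
  linarith

theorem le_add_mul_fderiv_add_sq_of_abs_fderiv_sub_le {E : Type*} [NormedAddCommGroup E]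
    [NormedSpace ℝ E] {f : E → ℝ} (hf : Differentiable ℝ f) {L : ℝ} {x v : E}
    (hv : ∀ t : ℝ, |fderiv ℝ f (x + t • v) v - fderiv ℝ f x v| ≤ L * |t|) (t : ℝ) :
    f (x + t • v) ≤ f x + t * fderiv ℝ f x v + L / 2 * t ^ 2 := by
  have hline : ∀ s : ℝ, HasDerivAt (fun s ↦ f (x + s • v)) (fderiv ℝ f (x + s • v) v) s :=
    fun s ↦ (hf _).hasFDerivAt.comp_hasDerivAt s
      (((hasDerivAt_id s).smul_const v).const_add x |>.congr_deriv (one_smul ℝ v))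
  simpa using le_add_mul_deriv_add_sq_of_abs_deriv_sub_le hline (by simpa using hv) t

theorem Function.update_add_eq_add_smul_single {ι R : Type*} [DecidableEq ι] [Semiring R]
    (x : ι → R) (i : ι) (a : R) :
    Function.update x i (x i + a) = x + a • Pi.single i 1 := by
  ext j
  rcases eq_or_ne j i with rfl | hj
  · simp
  · simp [hj]

theorem le_sub_sq_div_of_update_sub_fderiv_div {ι : Type*} [Fintype ι] [DecidableEq ι]
    {f : (ι → ℝ) → ℝ} (hf : Differentiable ℝ f) {L : ℝ} (hL : L ≠ 0) (x : ι → ℝ) (i : ι)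
    (hLip : ∀ α : ℝ, |fderiv ℝ f (Function.update x i (x i + α)) (Pi.single i 1)
      - fderiv ℝ f x (Pi.single i 1)| ≤ L * |α|) :
    f (Function.update x i (x i - fderiv ℝ f x (Pi.single i 1) / L)) ≤
      f x - (fderiv ℝ f x (Pi.single i 1)) ^ 2 / (2 * L) := by
  set g := fderiv ℝ f x (Pi.single i 1)
  simp only [Function.update_add_eq_add_smul_single] at hLip
  have h := le_add_mul_fderiv_add_sq_of_abs_fderiv_sub_le hf hLip (-(g / L))
  rw [sub_eq_add_neg, Function.update_add_eq_add_smul_single]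
  calc _ ≤ f x + -(g / L) * g + L / 2 * (-(g / L)) ^ 2 := h
    _ = f x - g ^ 2 / (2 * L) := by field_simp; ring

/-- The expectation over the uniformly random coordinate `i` is written as the average over `i`. -/
theorem stmt_17 (d : ℕ) (hd : 0 < d) (f : (Fin d → ℝ) → ℝ) (hf : Differentiable ℝ f)
    (L : ℝ) (hL : 0 < L)
    (hLip : ∀ x : Fin d → ℝ, ∀ i : Fin d, ∀ α : ℝ,
      |fderiv ℝ f (Function.update x i (x i + α)) (Pi.single i 1)
          - fderiv ℝ f x (Pi.single i 1)| ≤ L * |α|)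
    (ξ : Fin d → ℝ) :
    ((1 / (d : ℝ)) * ∑ i : Fin d,
        f (Function.update ξ i (ξ i - fderiv ℝ f ξ (Pi.single i 1) / L)) ≤
      f ξ - 1 / (2 * d * L) * ∑ i : Fin d, (fderiv ℝ f ξ (Pi.single i 1)) ^ 2) ∧
      ∀ fstar σ : ℝ, 0 < σ → (∀ y, fstar ≤ f y) →
        (∀ y : Fin d → ℝ,
          σ * (f y - fstar) ≤ 1 / 2 * ∑ i : Fin d, (fderiv ℝ f y (Pi.single i 1)) ^ 2) →
        (1 / (d : ℝ)) * (∑ i : Fin d,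
            f (Function.update ξ i (ξ i - fderiv ℝ f ξ (Pi.single i 1) / L))) - fstar ≤
          (1 - σ / (d * L)) * (f ξ - fstar) := by
  set g : Fin d → ℝ := fun i ↦ fderiv ℝ f ξ (Pi.single i 1)
  have hd' : (0 : ℝ) < d := Nat.cast_pos.mpr hd
  have hdecrease : (1 / (d : ℝ)) * ∑ i, f (Function.update ξ i (ξ i - g i / L)) ≤
      f ξ - 1 / (2 * d * L) * ∑ i, g i ^ 2 :=
    calc (1 / (d : ℝ)) * ∑ i, f (Function.update ξ i (ξ i - g i / L))
        ≤ (1 / (d : ℝ)) * ∑ i, (f ξ - g i ^ 2 / (2 * L)) := by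
          gcongr with i
          exact le_sub_sq_div_of_update_sub_fderiv_div hf hL.ne' ξ i (hLip ξ i)
      _ = f ξ - 1 / (2 * d * L) * ∑ i, g i ^ 2 := by
          rw [Finset.sum_sub_distrib, ← Finset.sum_div]
          simp only [Finset.sum_const, Finset.card_univ, Fintype.card_fin, nsmul_eq_mul]
          field_simp
  refine ⟨hdecrease, fun fstar σ _ _ hPL ↦ ?_⟩
  have hPLξ : σ / (d * L) * (f ξ - fstar) ≤ 1 / (2 * d * L) * ∑ i, g i ^ 2 := by
    have := mul_le_mul_of_nonneg_left (hPL ξ) (one_div_pos.mpr (mul_pos hd' hL)).le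
    calc σ / (d * L) * (f ξ - fstar) = 1 / (d * L) * (σ * (f ξ - fstar)) := by ring
      _ ≤ 1 / (d * L) * (1 / 2 * ∑ i, g i ^ 2) := this
      _ = 1 / (2 * d * L) * ∑ i, g i ^ 2 := by ring
  linarith
end
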